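/- Let B be a Banach A-bimodule such that every derivation A** → B* is weak*-to-weak* continuous. If Z^ℓ_{B**}(A**) = A** and every continuous derivation from A into B* is inner, then every continuous derivation from A** into B* is inner. -/

import Mathlib

open ContinuousLinearMap NormedSpace

noncomputable section

section Defs

variable {X Y Z W : Type} [NormedAddCommGroup X] [NormedSpace ℝ X]
  [NormedAddCommGroup Y] [NormedSpace ℝ Y] [NormedAddCommGroup Z] [NormedSpace ℝ Z]
  [NormedAddCommGroup W] [NormedSpace ℝ W]

instance strongDualBidualNormedAddCommGroup {V : Type} [NormedAddCommGroup V] [NormedSpace ℝ V] :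
    NormedAddCommGroup (StrongDual ℝ (StrongDual ℝ V)) :=
  ContinuousLinearMap.toNormedAddCommGroup

instance strongDualBidualNormedSpace {V : Type} [NormedAddCommGroup V] [NormedSpace ℝ V] :
    NormedSpace ℝ (StrongDual ℝ (StrongDual ℝ V)) :=
  ContinuousLinearMap.toNormedSpace

/-- The first adjoint `m^*` of a bounded bilinear map `m : X × Y → Z`,
as a map `Z^* × X → Y^*`, `⟨m^*(z',x), y⟩ = ⟨z', m(x,y)⟩`. -/
def adj1 (m : X →L[ℝ] Y →L[ℝ] Z) :
    StrongDual ℝ Z →L[ℝ] X →L[ℝ] StrongDual ℝ Y :=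
  (((ContinuousLinearMap.compL ℝ X (Y →L[ℝ] Z) (StrongDual ℝ Y)).flip m).comp
    (ContinuousLinearMap.compL ℝ Y Z ℝ))

@[simp] lemma adj1_apply (m : X →L[ℝ] Y →L[ℝ] Z) (z' : StrongDual ℝ Z) (x : X) (y : Y) :
    adj1 m z' x y = z' (m x y) := rfl

/-- The first (left) Arens extension `m^{***} : X^{**} × Y^{**} → Z^{**}` of a
bounded bilinear map `m : X × Y → Z`. -/
def arens (m : X →L[ℝ] Y →L[ℝ] Z) :
    StrongDual ℝ (StrongDual ℝ X) →L[ℝ] StrongDual ℝ (StrongDual ℝ Y) →L[ℝ] StrongDual ℝ (StrongDual ℝ Z) :=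
  adj1 (adj1 (adj1 m))

/-- The adjoint (dual map) of a bounded linear map. -/
def dualMap' (D : X →L[ℝ] Y) : StrongDual ℝ Y →L[ℝ] StrongDual ℝ X :=
  (ContinuousLinearMap.compL ℝ X Y ℝ).flip D

@[simp] lemma dualMap'_apply (D : X →L[ℝ] Y) (g : StrongDual ℝ Y) (x : X) :
    dualMap' D g x = g (D x) := rfl

/-- The second adjoint `D'' : X^{**} → Y^{**}` of a bounded linear map. -/
def bidualMap (D : X →L[ℝ] Y) : StrongDual ℝ (StrongDual ℝ X) →L[ℝ] StrongDual ℝ (StrongDual ℝ Y) :=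
  dualMap' (dualMap' D)

/-- Given an action `t : A × X → X`, the transposed action on the dual `X^*`:
`(dualAct t) a f = f ∘ (t a)`. -/
def dualAct (t : W →L[ℝ] X →L[ℝ] X) : W →L[ℝ] StrongDual ℝ X →L[ℝ] StrongDual ℝ X :=
  ((ContinuousLinearMap.compL ℝ X X ℝ).flip).comp t

@[simp] lemma dualAct_apply (t : W →L[ℝ] X →L[ℝ] X) (a : W) (f : StrongDual ℝ X) (x : X) :
    dualAct t a f x = f (t a x) := rfl

/-- `D : A → X` is a derivation with respect to the multiplication `mul'` on `A`
and the left action `l` and right action `r` (`r a x` means `x · a`) of `A` on `X`. -/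
def IsDer {A' : Type} [NormedAddCommGroup A'] [NormedSpace ℝ A']
    (mul' : A' →L[ℝ] A' →L[ℝ] A') (l r : A' →L[ℝ] X →L[ℝ] X) (D : A' →L[ℝ] X) : Prop :=
  ∀ a b : A', D (mul' a b) = l a (D b) + r b (D a)

/-- `D : A → X` is an inner derivation: `D a = a·x - x·a` for some `x`. -/
def IsInner {A' : Type} [NormedAddCommGroup A'] [NormedSpace ℝ A']
    (l r : A' →L[ℝ] X →L[ℝ] X) (D : A' →L[ℝ] X) : Prop :=
  ∃ x : X, ∀ a : A', D a = l a x - r a x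

/-- The bimodule axioms for actions `l`, `r` of an algebra with multiplication `mul'`. -/
def IsBimod {A' : Type} [NormedAddCommGroup A'] [NormedSpace ℝ A']
    (mul' : A' →L[ℝ] A' →L[ℝ] A') (l r : A' →L[ℝ] X →L[ℝ] X) : Prop :=
  (∀ a b x, l (mul' a b) x = l a (l b x)) ∧
  (∀ a b x, r (mul' a b) x = r b (r a x)) ∧
  (∀ a b x, l a (r b x) = r b (l a x))

/-- weak*-to-weak* continuity of a map between dual spaces. -/
def WStarCont (f : StrongDual ℝ X → StrongDual ℝ Y) : Prop :=
  ∀ y : Y, Continuous fun φ : WeakDual ℝ X => f φ y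

end Defs

/-- A packaged Banach `A`-bimodule (used to form iterated duals). -/
structure ModPk (A : Type) [NormedAddCommGroup A] [NormedSpace ℝ A] : Type 1 where
  X : Type
  [grp : NormedAddCommGroup X]
  [mod : NormedSpace ℝ X]
  l : A →L[ℝ] X →L[ℝ] X
  r : A →L[ℝ] X →L[ℝ] X

attribute [instance] ModPk.grp ModPk.mod

variable {A : Type} [NormedAddCommGroup A] [NormedSpace ℝ A]

/-- The canonical dual of a packaged bimodule. -/
def ModPk.dual (P : ModPk A) : ModPk A :=
  ⟨StrongDual ℝ P.X, dualAct P.r, dualAct P.l⟩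

/-- The `n`-th iterated dual of a packaged bimodule. -/
def ModPk.iter (P : ModPk A) : ℕ → ModPk A
  | 0 => P
  | n+1 => (P.iter n).dual

/-- A "level": an algebra (given by its bilinear multiplication) together with a bimodule. -/
structure Lvl : Type 1 where
  Alg : Type
  [g1 : NormedAddCommGroup Alg]
  [m1 : NormedSpace ℝ Alg]
  Mod : Type
  [g2 : NormedAddCommGroup Mod]
  [m2 : NormedSpace ℝ Mod]
  mul : Alg →L[ℝ] Alg →L[ℝ] Alg
  l : Alg →L[ℝ] Mod →L[ℝ] Mod
  r : Alg →L[ℝ] Mod →L[ℝ] Mod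

attribute [instance] Lvl.g1 Lvl.m1 Lvl.g2 Lvl.m2

/-- Passing to second duals: `A^{**}` with the first Arens product, acting on `B^{**}`
via the Arens extensions `π_ℓ^{***}` and `π_r^{***}` of the module actions. -/
def Lvl.double (Q : Lvl) : Lvl where
  Alg := StrongDual ℝ (StrongDual ℝ Q.Alg)
  Mod := StrongDual ℝ (StrongDual ℝ Q.Mod)
  mul := arens Q.mul
  l := arens Q.l
  r := (arens Q.r.flip).flip

/-- Iterated even duals: `Lvl.iter Q n` is the level `(A^{(2n)}, B^{(2n)})`. -/
def Lvl.iter (Q : Lvl) : ℕ → Lvl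
  | 0 => Q
  | n+1 => (Q.iter n).double

/-- The canonical embedding `A → A^{(2n)}`. -/
def Lvl.embA (Q : Lvl) : (n : ℕ) → Q.Alg →L[ℝ] (Q.iter n).Alg
  | 0 => ContinuousLinearMap.id ℝ _
  | n+1 => (inclusionInDoubleDual ℝ ((Q.iter n).Alg)).comp (Q.embA n)

/-- The canonical embedding `B → B^{(2n)}`. -/
def Lvl.embM (Q : Lvl) : (n : ℕ) → Q.Mod →L[ℝ] (Q.iter n).Mod
  | 0 => ContinuousLinearMap.id ℝ _
  | n+1 => (inclusionInDoubleDual ℝ ((Q.iter n).Mod)).comp (Q.embM n)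

/-- The left-topological-center condition `Z^ℓ_{A^{(2n+2)}}(B^{(2n+2)}) = B^{(2n+2)}`,
stated at the double of a level `Q`: for each `b` in the second-dual module, the map
`a ↦ b·a` is weak*-to-weak* continuous. -/
def Lvl.doubleZl (Q : Lvl) : Prop :=
  ∀ b : (Q.double).Mod, WStarCont (X := StrongDual ℝ Q.Alg) (Y := StrongDual ℝ Q.Mod)
    (fun a => (Q.double).r a b)

/-- The base level of a Banach algebra `A` with a Banach `A`-bimodule `B`. -/
def lvlOf (A : Type) [NormedRing A] [NormedAlgebra ℝ A]
    (B : Type) [NormedAddCommGroup B] [NormedSpace ℝ B]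
    (l r : A →L[ℝ] B →L[ℝ] B) : Lvl :=
  Lvl.mk A B (ContinuousLinearMap.mul ℝ A) l r
/-! Restricting a derivation `D : A** → B*` to `A` gives a derivation `A → B*`, hence an inner
one `δ_{b'}`. A weak*-continuous functional on a bidual `E**` is evaluation at a point of `E*`, so
it is determined by its values on `E`; as `D` and `F ↦ F·b' - b'·F` are both weak*-continuous and
agree on `A`, they agree on `A**`. The same argument on `B**`, available because `F` lies in the
topological centre, shows that `b'·F`, a priori in `B***`, comes from `B*`. -/

theorem WeakDual.exists_eq_apply_of_continuous {𝕜 V : Type*} [NontriviallyNormedField 𝕜]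
    [AddCommGroup V] [TopologicalSpace V] [Module 𝕜 V]
    (f : StrongDual 𝕜 (WeakDual 𝕜 V)) : ∃ v : V, ∀ φ : WeakDual 𝕜 V, f φ = φ v := by
  obtain ⟨v, rfl⟩ := LinearMap.dualEmbedding_surjective (topDualPairing 𝕜 V) f
  exact ⟨v, fun _ => rfl⟩

section Bidual

variable {E Y : Type} [NormedAddCommGroup E] [NormedSpace ℝ E]
  [NormedAddCommGroup Y] [NormedSpace ℝ Y]

theorem ext_bidual_of_continuous_weakDual {f g : StrongDual ℝ (StrongDual ℝ E) →L[ℝ] ℝ}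
    (hf : Continuous fun F : WeakDual ℝ (StrongDual ℝ E) => f F)
    (hg : Continuous fun F : WeakDual ℝ (StrongDual ℝ E) => g F)
    (h : ∀ x, f (inclusionInDoubleDual ℝ E x) = g (inclusionInDoubleDual ℝ E x)) : f = g := by
  obtain ⟨φ, hφ⟩ := WeakDual.exists_eq_apply_of_continuous
    (⟨(f - g).toLinearMap, hf.sub hg⟩ : StrongDual ℝ (WeakDual ℝ (StrongDual ℝ E)))
  replace hφ : ∀ F, f F - g F = F φ := hφ
  have hφ0 : φ = 0 := by
    ext x
    simpa [h x] using (hφ (inclusionInDoubleDual ℝ E x)).symm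
  ext F
  simpa [hφ0, sub_eq_zero] using hφ F

theorem ext_of_continuous_weakDual {D D' : StrongDual ℝ (StrongDual ℝ E) →L[ℝ] StrongDual ℝ Y}
    (hD : ∀ y, Continuous fun F : WeakDual ℝ (StrongDual ℝ E) => D F y)
    (hD' : ∀ y, Continuous fun F : WeakDual ℝ (StrongDual ℝ E) => D' F y)
    (h : ∀ x, D (inclusionInDoubleDual ℝ E x) = D' (inclusionInDoubleDual ℝ E x)) : D = D' := by
  ext F y
  exact DFunLike.congr_fun (ext_bidual_of_continuous_weakDual (f := D.flip y) (g := D'.flip y)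
    (hD y) (hD' y) fun x => DFunLike.congr_fun (h x) y) F

end Bidual

section Arens

variable {X Y Z : Type} [NormedAddCommGroup X] [NormedSpace ℝ X]
  [NormedAddCommGroup Y] [NormedSpace ℝ Y] [NormedAddCommGroup Z] [NormedSpace ℝ Z]

theorem arens_inclusionInDoubleDual (m : X →L[ℝ] Y →L[ℝ] Z) (x : X) (y : Y) :
    arens m (inclusionInDoubleDual ℝ X x) (inclusionInDoubleDual ℝ Y y) =
      inclusionInDoubleDual ℝ Z (m x y) :=
  rfl

theorem continuous_adj1_adj1_apply (m : X →L[ℝ] Y →L[ℝ] Z) (z' : StrongDual ℝ Z) (x : X) :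
    Continuous fun G : WeakDual ℝ (StrongDual ℝ Y) => adj1 (adj1 m) G z' x :=
  WeakDual.eval_continuous (adj1 m z' x)

theorem arens_apply_of_wStarCont (m : X →L[ℝ] Y →L[ℝ] Z) {F : StrongDual ℝ (StrongDual ℝ X)}
    (hF : WStarCont (fun G => arens m F G)) (G : StrongDual ℝ (StrongDual ℝ Y))
    (z' : StrongDual ℝ Z) : arens m F G z' = G (adj1 (adj1 m.flip) F z') :=
  DFunLike.congr_fun (ext_bidual_of_continuous_weakDual (f := (arens m F).flip z')
    (g := inclusionInDoubleDual ℝ _ (adj1 (adj1 m.flip) F z')) (hF z')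
    (WeakDual.eval_continuous _) fun _ => rfl) G

end Arens

section Derivation

variable {X Y : Type} [NormedAddCommGroup X] [NormedSpace ℝ X]
  [NormedAddCommGroup Y] [NormedSpace ℝ Y]

def IsArensDer (mul' : X →L[ℝ] X →L[ℝ] X) (l r : X →L[ℝ] Y →L[ℝ] Y)
    (D : StrongDual ℝ (StrongDual ℝ X) →L[ℝ] StrongDual ℝ Y) : Prop :=
  ∀ F G : StrongDual ℝ (StrongDual ℝ X),
    inclusionInDoubleDual ℝ (StrongDual ℝ Y) (D (arens mul' F G)) =
      dualAct (W := StrongDual ℝ (StrongDual ℝ X)) (X := StrongDual ℝ (StrongDual ℝ Y))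
        ((arens r.flip).flip) F (inclusionInDoubleDual ℝ (StrongDual ℝ Y) (D G)) +
      dualAct (W := StrongDual ℝ (StrongDual ℝ X)) (X := StrongDual ℝ (StrongDual ℝ Y))
        (arens l) G (inclusionInDoubleDual ℝ (StrongDual ℝ Y) (D F))

theorem IsArensDer.isDer_comp_inclusionInDoubleDual {mul' : X →L[ℝ] X →L[ℝ] X}
    {l r : X →L[ℝ] Y →L[ℝ] Y} {D : StrongDual ℝ (StrongDual ℝ X) →L[ℝ] StrongDual ℝ Y}
    (hD : IsArensDer mul' l r D) :
    IsDer mul' (dualAct r) (dualAct l) (D.comp (inclusionInDoubleDual ℝ X)) := by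
  intro a b
  ext y
  have hab := hD (inclusionInDoubleDual ℝ X a) (inclusionInDoubleDual ℝ X b)
  rw [arens_inclusionInDoubleDual] at hab
  exact DFunLike.congr_fun hab (inclusionInDoubleDual ℝ Y y)

theorem dualAct_arens_flip_flip_inclusionInDoubleDual (r : X →L[ℝ] Y →L[ℝ] Y)
    (F : StrongDual ℝ (StrongDual ℝ X)) (y' : StrongDual ℝ Y) :
    dualAct (W := StrongDual ℝ (StrongDual ℝ X)) (X := StrongDual ℝ (StrongDual ℝ Y))
      ((arens r.flip).flip) F (inclusionInDoubleDual ℝ (StrongDual ℝ Y) y') =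
      inclusionInDoubleDual ℝ (StrongDual ℝ Y) (adj1 (adj1 r.flip) F y') :=
  rfl

theorem dualAct_arens_inclusionInDoubleDual_of_wStarCont (l : X →L[ℝ] Y →L[ℝ] Y)
    {F : StrongDual ℝ (StrongDual ℝ X)} (hF : WStarCont (fun G => arens l F G))
    (y' : StrongDual ℝ Y) :
    dualAct (W := StrongDual ℝ (StrongDual ℝ X)) (X := StrongDual ℝ (StrongDual ℝ Y))
      (arens l) F (inclusionInDoubleDual ℝ (StrongDual ℝ Y) y') =
      inclusionInDoubleDual ℝ (StrongDual ℝ Y) (adj1 (adj1 l.flip) F y') := by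
  ext G
  exact arens_apply_of_wStarCont l hF G y'

end Derivation

theorem stmt12_general (A : Type) [NormedRing A] [NormedAlgebra ℝ A]
    (B : Type) [NormedAddCommGroup B] [NormedSpace ℝ B]
    (l r : A →L[ℝ] B →L[ℝ] B)
    -- every derivation `A** → B*` is weak*-to-weak* continuous
    (hwcont : ∀ D : StrongDual ℝ (StrongDual ℝ A) →L[ℝ] StrongDual ℝ B,
      (∀ F G : StrongDual ℝ (StrongDual ℝ A),
        inclusionInDoubleDual ℝ (StrongDual ℝ B) (D (arens (ContinuousLinearMap.mul ℝ A) F G)) =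
          dualAct (W := StrongDual ℝ (StrongDual ℝ A)) (X := StrongDual ℝ (StrongDual ℝ B)) ((arens r.flip).flip) F
            (inclusionInDoubleDual ℝ (StrongDual ℝ B) (D G)) +
          dualAct (W := StrongDual ℝ (StrongDual ℝ A)) (X := StrongDual ℝ (StrongDual ℝ B)) (arens l) G
            (inclusionInDoubleDual ℝ (StrongDual ℝ B) (D F))) →
      ∀ b : B, Continuous fun F : WeakDual ℝ (StrongDual ℝ A) => D F b)
    -- `Z^ℓ_{B**}(A**) = A**`
    (hZ : ∀ F : StrongDual ℝ (StrongDual ℝ A),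
      WStarCont (X := StrongDual ℝ B) (Y := StrongDual ℝ B) (fun G => arens l F G))
    -- `H¹(A, B*) = 0`
    (h1 : ∀ D : A →L[ℝ] StrongDual ℝ B,
      IsDer (ContinuousLinearMap.mul ℝ A) (dualAct r) (dualAct l) D →
      IsInner (dualAct r) (dualAct l) D) :
    -- `H¹(A**, B*) = 0`
    ∀ D : StrongDual ℝ (StrongDual ℝ A) →L[ℝ] StrongDual ℝ B,
      (∀ F G : StrongDual ℝ (StrongDual ℝ A),
        inclusionInDoubleDual ℝ (StrongDual ℝ B) (D (arens (ContinuousLinearMap.mul ℝ A) F G)) =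
          dualAct (W := StrongDual ℝ (StrongDual ℝ A)) (X := StrongDual ℝ (StrongDual ℝ B)) ((arens r.flip).flip) F
            (inclusionInDoubleDual ℝ (StrongDual ℝ B) (D G)) +
          dualAct (W := StrongDual ℝ (StrongDual ℝ A)) (X := StrongDual ℝ (StrongDual ℝ B)) (arens l) G
            (inclusionInDoubleDual ℝ (StrongDual ℝ B) (D F))) →
      ∃ b' : StrongDual ℝ B, ∀ F : StrongDual ℝ (StrongDual ℝ A),
        inclusionInDoubleDual ℝ (StrongDual ℝ B) (D F) =
          dualAct (W := StrongDual ℝ (StrongDual ℝ A)) (X := StrongDual ℝ (StrongDual ℝ B)) ((arens r.flip).flip) F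
            (inclusionInDoubleDual ℝ (StrongDual ℝ B) b') -
          dualAct (W := StrongDual ℝ (StrongDual ℝ A)) (X := StrongDual ℝ (StrongDual ℝ B)) (arens l) F
            (inclusionInDoubleDual ℝ (StrongDual ℝ B) b') := by
  intro D hD
  obtain ⟨b', hb'⟩ := h1 _ (IsArensDer.isDer_comp_inclusionInDoubleDual hD)
  have hDb : D = (adj1 (adj1 r.flip)).flip b' - (adj1 (adj1 l.flip)).flip b' :=
    ext_of_continuous_weakDual (hwcont D hD)
      (fun _ => (continuous_adj1_adj1_apply _ _ _).sub (continuous_adj1_adj1_apply _ _ _)) hb'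
  refine ⟨b', fun F => ?_⟩
  rw [dualAct_arens_flip_flip_inclusionInDoubleDual,
    dualAct_arens_inclusionInDoubleDual_of_wStarCont l (hZ F), ← map_sub, hDb]
  rfl

/-- **Theorem 2-17.** Let `B` be a Banach `A`-bimodule such that every derivation
`A** → B*` is weak*-to-weak* continuous. If `Z^ℓ_{B**}(A**) = A**` and every continuous
derivation `A → B*` is inner, then every continuous derivation `A** → B*` is inner
(with inner element in `B*`; the derivation identity and the inner identity are read
inside `B***` via the canonical embedding `B* → B***`). -/
theorem stmt12 (A : Type) [NormedRing A] [NormedAlgebra ℝ A] [CompleteSpace A]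
    (B : Type) [NormedAddCommGroup B] [NormedSpace ℝ B] [CompleteSpace B]
    (l r : A →L[ℝ] B →L[ℝ] B)
    (hbim : IsBimod (ContinuousLinearMap.mul ℝ A) l r)
    -- every derivation `A** → B*` is weak*-to-weak* continuous
    (hwcont : ∀ D : StrongDual ℝ (StrongDual ℝ A) →L[ℝ] StrongDual ℝ B,
      (∀ F G : StrongDual ℝ (StrongDual ℝ A),
        inclusionInDoubleDual ℝ (StrongDual ℝ B) (D (arens (ContinuousLinearMap.mul ℝ A) F G)) =
          dualAct (W := StrongDual ℝ (StrongDual ℝ A)) (X := StrongDual ℝ (StrongDual ℝ B)) ((arens r.flip).flip) F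
            (inclusionInDoubleDual ℝ (StrongDual ℝ B) (D G)) +
          dualAct (W := StrongDual ℝ (StrongDual ℝ A)) (X := StrongDual ℝ (StrongDual ℝ B)) (arens l) G
            (inclusionInDoubleDual ℝ (StrongDual ℝ B) (D F))) →
      ∀ b : B, Continuous fun F : WeakDual ℝ (StrongDual ℝ A) => D F b)
    -- `Z^ℓ_{B**}(A**) = A**`
    (hZ : ∀ F : StrongDual ℝ (StrongDual ℝ A),
      WStarCont (X := StrongDual ℝ B) (Y := StrongDual ℝ B) (fun G => arens l F G))
    -- `H¹(A, B*) = 0`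
    (h1 : ∀ D : A →L[ℝ] StrongDual ℝ B,
      IsDer (ContinuousLinearMap.mul ℝ A) (dualAct r) (dualAct l) D →
      IsInner (dualAct r) (dualAct l) D) :
    -- `H¹(A**, B*) = 0`
    ∀ D : StrongDual ℝ (StrongDual ℝ A) →L[ℝ] StrongDual ℝ B,
      (∀ F G : StrongDual ℝ (StrongDual ℝ A),
        inclusionInDoubleDual ℝ (StrongDual ℝ B) (D (arens (ContinuousLinearMap.mul ℝ A) F G)) =
          dualAct (W := StrongDual ℝ (StrongDual ℝ A)) (X := StrongDual ℝ (StrongDual ℝ B)) ((arens r.flip).flip) F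
            (inclusionInDoubleDual ℝ (StrongDual ℝ B) (D G)) +
          dualAct (W := StrongDual ℝ (StrongDual ℝ A)) (X := StrongDual ℝ (StrongDual ℝ B)) (arens l) G
            (inclusionInDoubleDual ℝ (StrongDual ℝ B) (D F))) →
      ∃ b' : StrongDual ℝ B, ∀ F : StrongDual ℝ (StrongDual ℝ A),
        inclusionInDoubleDual ℝ (StrongDual ℝ B) (D F) =
          dualAct (W := StrongDual ℝ (StrongDual ℝ A)) (X := StrongDual ℝ (StrongDual ℝ B)) ((arens r.flip).flip) F
            (inclusionInDoubleDual ℝ (StrongDual ℝ B) b') -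
          dualAct (W := StrongDual ℝ (StrongDual ℝ A)) (X := StrongDual ℝ (StrongDual ℝ B)) (arens l) F
            (inclusionInDoubleDual ℝ (StrongDual ℝ B) b') :=
  stmt12_general A B l r hwcont hZ h1
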